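/- Divergence single-letterization chain: D(P_{M̃_k Ỹ_kⁿ} ‖ Q_{M̃_k} × P_{Ỹ_kⁿ}) ≤ ∑_{ℓ=1}^{k} I(M̃_ℓ; Ỹ_ℓⁿ) ≤ n·∑_{ℓ=1}^{k} I(U_ℓ; Ỹ_ℓ), where U_ℓ := (M̃_ℓ, Ỹ₀^{T−1},…,Ỹ_k^{T−1}, T) and Ỹ_ℓ := Ỹ_{ℓ,T}. -/

import Mathlib

open Filter

noncomputable section

/-- `p` is a probability mass function on the finite alphabet `α`. -/
def IsPMF {α : Type*} [Fintype α] (p : α → ℝ) : Prop :=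
  (∀ a, 0 ≤ p a) ∧ ∑ a, p a = 1

open Classical in
/-- Probability that the random variable `X` takes the value `a`, under the pmf `p`. -/
def probEq {Ω α : Type*} [Fintype Ω] (p : Ω → ℝ) (X : Ω → α) (a : α) : ℝ :=
  ∑ ω, if X ω = a then p ω else 0

/-- Shannon entropy (base 2) of the random variable `X` under the pmf `p`. -/
def entOf {Ω α : Type*} [Fintype Ω] (p : Ω → ℝ) (X : Ω → α) : ℝ :=
  -∑ ω, p ω * Real.logb 2 (probEq p X (X ω))

/-- Conditional Shannon entropy `H(X | Y)` under the pmf `p`. -/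
def condEntOf {Ω α β : Type*} [Fintype Ω] (p : Ω → ℝ) (X : Ω → α) (Y : Ω → β) : ℝ :=
  entOf p (fun ω => (X ω, Y ω)) - entOf p Y

/-- Mutual information `I(X ; Y)` under the pmf `p`. -/
def miOf {Ω α β : Type*} [Fintype Ω] (p : Ω → ℝ) (X : Ω → α) (Y : Ω → β) : ℝ :=
  entOf p X + entOf p Y - entOf p (fun ω => (X ω, Y ω))

/-- Conditional mutual information `I(X ; Y | Z)` under the pmf `p`. -/
def condMIOf {Ω α β γ : Type*} [Fintype Ω] (p : Ω → ℝ) (X : Ω → α) (Y : Ω → β)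
    (Z : Ω → γ) : ℝ :=
  condEntOf p X Z + condEntOf p Y Z - condEntOf p (fun ω => (X ω, Y ω)) Z

open Classical in
/-- Probability of the set `S` under the pmf `p`. -/
def probSet {Ω : Type*} [Fintype Ω] (p : Ω → ℝ) (S : Set Ω) : ℝ :=
  ∑ ω, if ω ∈ S then p ω else 0

open Classical in
/-- Number of occurrences of the symbol `a` in the sequence `w`. -/
def Ncount {W : Type*} {n : ℕ} (w : Fin n → W) (a : W) : ℕ :=
  (Finset.univ.filter (fun i => w i = a)).card

/-- The strongly typical set `T_μ⁽ⁿ⁾(P)`. -/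
def typicalSet {W : Type*} [Fintype W] (P : W → ℝ) (μ : ℝ) (n : ℕ) : Set (Fin n → W) :=
  {w | ∀ a, |((Ncount w a : ℝ)) / n - P a| ≤ μ ∧ (P a = 0 → Ncount w a = 0)}

/-- The typicality parameter `μ_n = n^{-1/3}`. -/
def μseq (n : ℕ) : ℝ := (n : ℝ) ^ (-(1/3 : ℝ))

section KHop

variable (k : ℕ) (Y : ℕ → Type) [∀ i, Fintype (Y i)] [∀ i, Nonempty (Y i)]

/-- The index `j` viewed as an element of `Fin (k+1)`. -/
def idxLo (j : Fin k) : Fin (k + 1) := ⟨(j : ℕ), Nat.lt_succ_of_lt j.isLt⟩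

/-- The index `j+1` viewed as an element of `Fin (k+1)`. -/
def idxHi (j : Fin k) : Fin (k + 1) := ⟨(j : ℕ) + 1, Nat.succ_lt_succ j.isLt⟩

variable (P : (∀ i : Fin (k + 1), Y i) → ℝ)

/-- The i.i.d. law of the source tuple `(Y₀ⁿ,…,Y_kⁿ)` under hypothesis `H = 0`. -/
def iidK (n : ℕ) (ys : ∀ i : Fin (k + 1), Fin n → Y i) : ℝ :=
  ∏ t : Fin n, P (fun i => ys i t)

open Classical in
/-- The marginal pmf of `Y_i` under `P`. -/
def margK (i : Fin (k + 1)) (c : Y i) : ℝ :=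
  ∑ y : ∀ i : Fin (k + 1), Y i, if y i = c then P y else 0

/-- The product of the marginals `P_{Y₀}·P_{Y₁}⋯P_{Y_k}`. -/
def prodMargK (y : ∀ i : Fin (k + 1), Y i) : ℝ := ∏ i, margK k Y P i (y i)

/-- The i.i.d. law of the source tuple under hypothesis `H = 1` (product of marginals). -/
def iidQK (n : ℕ) (ys : ∀ i : Fin (k + 1), Fin n → Y i) : ℝ :=
  ∏ t : Fin n, prodMargK k Y P (fun i => ys i t)

open Classical in
/-- The pairwise marginal `P_{Y_j Y_{j+1}}` of `P`. -/
def pairMargK (j : Fin k) (a : Y (j : ℕ)) (b : Y ((j : ℕ) + 1)) : ℝ :=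
  ∑ y : ∀ i : Fin (k + 1), Y i, if y (idxLo k j) = a ∧ y (idxHi k j) = b then P y else 0

open Classical in
/-- `P` forms the Markov chain `Y₀ → Y₁ → ⋯ → Y_k`. -/
def IsMarkovChainK : Prop :=
  ∀ y : ∀ i : Fin (k + 1), Y i,
    P y * ∏ i ∈ Finset.univ.filter (fun i : Fin (k + 1) => 0 < (i : ℕ) ∧ (i : ℕ) < k),
        margK k Y P i (y i)
      = ∏ j : Fin k, pairMargK k Y P j (y (idxLo k j)) (y (idxHi k j))

/-- Extension of a source tuple to all natural indices (junk beyond `k`). -/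
def extendTup (n : ℕ) (ys : ∀ i : Fin (k + 1), Fin n → Y i) (ℓ : ℕ) : Fin n → Y ℓ :=
  if h : ℓ < k + 1 then ys ⟨ℓ, h⟩ else fun _ => Classical.arbitrary (Y ℓ)

/-- The messages computed recursively from the encoders:
`msgRec φ ys' ℓ` is the message `M_{ℓ+1}`. -/
def msgRec (n : ℕ) (φ : ∀ ℓ : ℕ, (Fin n → Y ℓ) → ℕ → ℕ)
    (ys' : ∀ ℓ : ℕ, Fin n → Y ℓ) : ℕ → ℕ
  | 0 => φ 0 (ys' 0) 0
  | (ℓ + 1) => φ (ℓ + 1) (ys' (ℓ + 1)) (msgRec n φ ys' ℓ)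

/-- A source tuple viewed as one sequence over the product alphabet. -/
def tupleSeq {n : ℕ} (ys : ∀ i : Fin (k + 1), Fin n → Y i) :
    Fin n → (∀ i : Fin (k + 1), Y i) :=
  fun t i => ys i t

/-- The acceptance region `A_k` of the decision center `R_k`: the tuples on which the
guess is `Ĥ_k = 0` (decision `false`). -/
def acceptSet (n : ℕ) (φ : ∀ ℓ : ℕ, (Fin n → Y ℓ) → ℕ → ℕ)
    (g : (Fin n → Y k) → ℕ → Bool) : Set (∀ i : Fin (k + 1), Fin n → Y i) :=
  {ys | g (extendTup k Y n ys k) (msgRec Y n φ (extendTup k Y n ys) (k - 1)) = false}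

/-- The set `D_k`: the acceptance region intersected with the strongly typical set. -/
def DsetCM (n : ℕ) (φ : ∀ ℓ : ℕ, (Fin n → Y ℓ) → ℕ → ℕ)
    (g : (Fin n → Y k) → ℕ → Bool) : Set (∀ i : Fin (k + 1), Fin n → Y i) :=
  acceptSet k Y n φ g ∩ {ys | tupleSeq k Y ys ∈ typicalSet P (μseq n) n}

/-- `Δ_k = Pr[(Y₀ⁿ,…,Y_kⁿ) ∈ D_k]` under `H = 0`. -/
def DeltaCM (n : ℕ) (φ : ∀ ℓ : ℕ, (Fin n → Y ℓ) → ℕ → ℕ)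
    (g : (Fin n → Y k) → ℕ → Bool) : ℝ :=
  probSet (iidK k Y P n) (DsetCM k Y P n φ g)

open Classical in
/-- The change-of-measure pmf of `(Ỹ₀ⁿ,…,Ỹ_kⁿ)`: the `H = 0` law conditioned on `D_k`. -/
def ptildeCM (n : ℕ) (φ : ∀ ℓ : ℕ, (Fin n → Y ℓ) → ℕ → ℕ)
    (g : (Fin n → Y k) → ℕ → Bool) (ys : ∀ i : Fin (k + 1), Fin n → Y i) : ℝ :=
  if ys ∈ DsetCM k Y P n φ g then iidK k Y P n ys / DeltaCM k Y P n φ g else 0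

/-- The pmf of `((Ỹ₀ⁿ,…,Ỹ_kⁿ), T)` with `T` uniform on `{1,…,n}` independent of the rest. -/
def pfullCM (n : ℕ) (φ : ∀ ℓ : ℕ, (Fin n → Y ℓ) → ℕ → ℕ)
    (g : (Fin n → Y k) → ℕ → Bool)
    (ω : (∀ i : Fin (k + 1), Fin n → Y i) × Fin n) : ℝ :=
  ptildeCM k Y P n φ g ω.1 / n

/-- The random variable `M̃_{j+1}` (the message of hop `j+1` applied to the tilde sources). -/
def MtilRV (n : ℕ) (φ : ∀ ℓ : ℕ, (Fin n → Y ℓ) → ℕ → ℕ) (j : ℕ)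
    (ω : (∀ i : Fin (k + 1), Fin n → Y i) × Fin n) : ℕ :=
  msgRec Y n φ (extendTup k Y n ω.1) j

open Classical in
/-- The prefixes `(Ỹ₀^{T−1},…,Ỹ_k^{T−1})` as a random variable. -/
def prefixAll (n : ℕ) (ω : (∀ i : Fin (k + 1), Fin n → Y i) × Fin n) :
    ∀ i : Fin (k + 1), Fin n → Option (Y i) :=
  fun i t => if (t : ℕ) < (ω.2 : ℕ) then some (ω.1 i t) else none

/-- The auxiliary random variable `U_{j+1} := (M̃_{j+1}, Ỹ₀^{T−1},…,Ỹ_k^{T−1}, T)`. -/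
def UvarCM (n : ℕ) (φ : ∀ ℓ : ℕ, (Fin n → Y ℓ) → ℕ → ℕ) (j : ℕ)
    (ω : (∀ i : Fin (k + 1), Fin n → Y i) × Fin n) :
    ℕ × (∀ i : Fin (k + 1), Fin n → Option (Y i)) × Fin n :=
  (MtilRV k Y n φ j ω, prefixAll k Y n ω, ω.2)

/-- The type-I error probability `α_{k,n} = Pr[Ĥ_k = 1 | H = 0]`. -/
def alphaCM (n : ℕ) (φ : ∀ ℓ : ℕ, (Fin n → Y ℓ) → ℕ → ℕ)
    (g : (Fin n → Y k) → ℕ → Bool) : ℝ :=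
  probSet (iidK k Y P n) ((acceptSet k Y n φ g)ᶜ)

/-- The type-II error probability `β_{k,n} = Pr[Ĥ_k = 0 | H = 1]`. -/
def betaCM (n : ℕ) (φ : ∀ ℓ : ℕ, (Fin n → Y ℓ) → ℕ → ℕ)
    (g : (Fin n → Y k) → ℕ → Bool) : ℝ :=
  probSet (iidQK k Y P n) (acceptSet k Y n φ g)

end KHop

section KHopQ

variable (k : ℕ) (Y : ℕ → Type) [∀ i, Fintype (Y i)] [∀ i, Nonempty (Y i)]
variable (P : (∀ i : Fin (k + 1), Y i) → ℝ)

/-- Extension of a partial source tuple `(y₀ⁿ,…,y_{k−1}ⁿ)` to all natural indices. -/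
def partialExt (n : ℕ) (pys : ∀ j : Fin k, Fin n → Y (j : ℕ)) (ℓ : ℕ) : Fin n → Y ℓ :=
  if h : ℓ < k then pys ⟨ℓ, h⟩ else fun _ => Classical.arbitrary (Y ℓ)

/-- The marginal law of the tilde sequence `Ỹ_iⁿ` (component `i` of the tilde tuple). -/
def margSeqT (n : ℕ) (φ : ∀ ℓ : ℕ, (Fin n → Y ℓ) → ℕ → ℕ)
    (g : (Fin n → Y k) → ℕ → Bool) (i : Fin (k + 1)) (s : Fin n → Y i) : ℝ :=
  probEq (ptildeCM k Y P n φ g) (fun ys => ys i) s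

open Classical in
/-- `Q_{M̃_k}`: the pmf of the message `m_k` obtained by applying the encoders to
independent inputs with the marginal distributions `P_{Ỹ₀ⁿ},…,P_{Ỹ_{k−1}ⁿ}`. -/
def QmsgCM (n : ℕ) (φ : ∀ ℓ : ℕ, (Fin n → Y ℓ) → ℕ → ℕ)
    (g : (Fin n → Y k) → ℕ → Bool) (m : ℕ) : ℝ :=
  ∑ pys : ∀ j : Fin k, Fin n → Y (j : ℕ),
    (∏ j : Fin k, margSeqT k Y P n φ g (idxLo k j) (pys j)) *
      (if msgRec Y n φ (partialExt k Y n pys) (k - 1) = m then 1 else 0)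

open Classical in
/-- `(Q_{M̃_k} × P_{Ỹ_kⁿ})(A_k)`: the probability under the product of `Q_{M̃_k}` and the
tilde marginal of `Ỹ_kⁿ` of the acceptance event `g_k(m_k, y_kⁿ) = 0`. -/
def QPaccCM (n : ℕ) (φ : ∀ ℓ : ℕ, (Fin n → Y ℓ) → ℕ → ℕ)
    (g : (Fin n → Y k) → ℕ → Bool) : ℝ :=
  ∑ pys : ∀ j : Fin k, Fin n → Y (j : ℕ), ∑ yk : Fin n → Y k,
    (∏ j : Fin k, margSeqT k Y P n φ g (idxLo k j) (pys j)) *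
      margSeqT k Y P n φ g (Fin.last k) yk *
      (if g yk (msgRec Y n φ (partialExt k Y n pys) (k - 1)) = false then 1 else 0)

/-- The pair `(M̃_k, Ỹ_kⁿ)` as a random variable of the tilde source tuple. -/
def MYpairCM (n : ℕ) (φ : ∀ ℓ : ℕ, (Fin n → Y ℓ) → ℕ → ℕ)
    (ys : ∀ i : Fin (k + 1), Fin n → Y i) : ℕ × (Fin n → Y k) :=
  (msgRec Y n φ (extendTup k Y n ys) (k - 1), extendTup k Y n ys k)

/-- The KL divergence `D(P_{M̃_k Ỹ_kⁿ} ‖ Q_{M̃_k} × P_{Ỹ_kⁿ})`. -/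
def klJointCM (n : ℕ) (φ : ∀ ℓ : ℕ, (Fin n → Y ℓ) → ℕ → ℕ)
    (g : (Fin n → Y k) → ℕ → Bool) : ℝ :=
  ∑ ys : ∀ i : Fin (k + 1), Fin n → Y i,
    ptildeCM k Y P n φ g ys *
      Real.logb 2
        (probEq (ptildeCM k Y P n φ g) (MYpairCM k Y n φ) (MYpairCM k Y n φ ys)
          / (QmsgCM k Y P n φ g (MYpairCM k Y n φ ys).1 *
              margSeqT k Y P n φ g (Fin.last k) (MYpairCM k Y n φ ys).2))

end KHopQ

/-!
Both inequalities are bookkeeping with entropies under the conditioned law `P̃`.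

For the first, realise the tilde sources together with an independent copy drawn from the
product of their marginals; `Q_{M̃_k} × P_{Ỹ_kⁿ}` is then the law of the copy's `(M_k, Y_kⁿ)`.
Since the copy's `M_ℓ` is independent of its `Y_ℓⁿ`, the chain rule for divergence splits
`D(M_ℓ, Y_ℓⁿ)` into `I(M̃_ℓ; Ỹ_ℓⁿ) + D(M_ℓ)`, and data processing through the encoder bounds
`D(M_{ℓ+1})` by `D(M_ℓ, Y_ℓⁿ)`; iterating over the hops gives the first bound.

The second is the usual single-letterization: by the chain rule over time,
`I(M; Yⁿ) = ∑_t I(M; Y_t | Y^{t-1}) ≤ ∑_t I(M, Y₀^{t-1}, …, Y_k^{t-1}; Y_t) = n · I(U; Y_T | T)`,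
and `I(U; Y_T | T) ≤ I(U; Y_T)` because `T` is part of `U`.
-/

section ProbEq

variable {Ω α β : Type*} [Fintype Ω] {p : Ω → ℝ}

lemma probEq_nonneg (hp : ∀ ω, 0 ≤ p ω) (X : Ω → α) (a : α) : 0 ≤ probEq p X a :=
  Finset.sum_nonneg fun ω _ => by split_ifs <;> simp [hp ω]

lemma le_probEq_self (hp : ∀ ω, 0 ≤ p ω) (X : Ω → α) (ω : Ω) : p ω ≤ probEq p X (X ω) := by
  classical
  simpa [probEq] using Finset.single_le_sum (f := fun ω' => if X ω' = X ω then p ω' else 0)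
    (fun ω' _ => by split_ifs <;> simp [hp ω']) (Finset.mem_univ ω)

lemma probEq_pos (hp : ∀ ω, 0 ≤ p ω) (X : Ω → α) {ω : Ω} (hω : p ω ≠ 0) :
    0 < probEq p X (X ω) :=
  ((hp ω).lt_of_ne' hω).trans_le (le_probEq_self hp X ω)

lemma sum_probEq_le (hp : ∀ ω, 0 ≤ p ω) (X : Ω → α) (f : α → β) {S : Finset α} {b : β}
    (hS : ∀ a ∈ S, f a = b) : ∑ a ∈ S, probEq p X a ≤ probEq p (fun ω => f (X ω)) b := by
  classical
  unfold probEq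
  rw [Finset.sum_comm]
  refine Finset.sum_le_sum fun ω _ => ?_
  rw [Finset.sum_ite_eq]
  split_ifs with h1 h2 h2 <;> first | rfl | exact hp ω | exact absurd (hS _ h1) h2

lemma probEq_le_probEq_comp (hp : ∀ ω, 0 ≤ p ω) (X : Ω → α) (f : α → β) (a : α) :
    probEq p X a ≤ probEq p (fun ω => f (X ω)) (f a) := by
  simpa using sum_probEq_le hp X f (S := {a}) (by simp)

lemma probEq_const (hp1 : ∑ ω, p ω = 1) (c : α) : probEq p (fun _ => c) c = 1 := by
  simpa [probEq] using hp1

lemma sum_probEq_le_one (hp : ∀ ω, 0 ≤ p ω) (hp1 : ∑ ω, p ω = 1) (X : Ω → α) (S : Finset α) :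
    ∑ a ∈ S, probEq p X a ≤ 1 :=
  (sum_probEq_le hp X (fun _ => ()) fun _ _ => rfl).trans_eq (probEq_const hp1 ())

lemma sum_probEq [Fintype α] (X : Ω → α) : ∑ a, probEq p X a = ∑ ω, p ω := by
  classical
  unfold probEq
  rw [Finset.sum_comm]
  simp

lemma sum_mul_comp [DecidableEq α] (X : Ω → α) (F : α → ℝ) :
    ∑ ω, p ω * F (X ω) = ∑ a ∈ Finset.univ.image X, probEq p X a * F a := by
  rw [← Finset.sum_fiberwise_of_maps_to (g := X) fun ω _ => Finset.mem_image_of_mem X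
    (Finset.mem_univ ω)]
  refine Finset.sum_congr rfl fun a _ => ?_
  rw [probEq, Finset.sum_filter, Finset.sum_mul]
  exact Finset.sum_congr rfl fun ω _ => by split_ifs with h <;> simp [h]

lemma sum_mul_div_probEq_le (hp : ∀ ω, 0 ≤ p ω) [DecidableEq α] (X : Ω → α) (G : α → ℝ)
    (hG : ∀ a, 0 ≤ G a) :
    ∑ ω, p ω * (G (X ω) / probEq p X (X ω)) ≤ ∑ a ∈ Finset.univ.image X, G a := by
  rw [sum_mul_comp X (fun a => G a / probEq p X a)]
  refine Finset.sum_le_sum fun a _ => ?_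
  rcases (probEq_nonneg hp X a).eq_or_lt with h | h
  · rw [← h, zero_mul]; exact hG a
  · rw [mul_div_cancel₀ _ h.ne']

lemma sum_mul_congr_of_ne_zero {f f' : Ω → ℝ} (h : ∀ ω, p ω ≠ 0 → f ω = f' ω) :
    ∑ ω, p ω * f ω = ∑ ω, p ω * f' ω :=
  Finset.sum_congr rfl fun ω _ => by
    by_cases hω : p ω = 0
    · simp [hω]
    · rw [h ω hω]

lemma sum_mul_logb_nonpos (hp : ∀ ω, 0 ≤ p ω) (hp1 : ∑ ω, p ω = 1) {r : Ω → ℝ}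
    (hr : ∀ ω, p ω ≠ 0 → 0 < r ω) (hsum : ∑ ω, p ω * r ω ≤ 1) :
    ∑ ω, p ω * Real.logb 2 (r ω) ≤ 0 := by
  have hlog2 : (0 : ℝ) < Real.log 2 := Real.log_pos one_lt_two
  have hterm : ∀ ω, p ω * Real.logb 2 (r ω) ≤ (p ω * r ω - p ω) / Real.log 2 := by
    intro ω
    by_cases hω : p ω = 0
    · simp [hω]
    · rw [Real.logb, le_div_iff₀ hlog2, mul_div_assoc', div_mul_cancel₀ _ hlog2.ne']
      nlinarith [Real.log_le_sub_one_of_pos (hr ω hω), hp ω]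
  calc ∑ ω, p ω * Real.logb 2 (r ω) ≤ ∑ ω, (p ω * r ω - p ω) / Real.log 2 :=
        Finset.sum_le_sum fun ω _ => hterm ω
    _ = ((∑ ω, p ω * r ω) - 1) / Real.log 2 := by
        rw [← Finset.sum_div, Finset.sum_sub_distrib, hp1]
    _ ≤ 0 := div_nonpos_of_nonpos_of_nonneg (by linarith) hlog2.le

end ProbEq

section Information

variable {Ω α β γ : Type*} [Fintype Ω] {p : Ω → ℝ}

lemma probEq_congr_of_fiber {X : Ω → α} {X' : Ω → β} (h : ∀ ω ω', X ω = X ω' ↔ X' ω = X' ω')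
    (ω : Ω) : probEq p X (X ω) = probEq p X' (X' ω) := by
  classical
  unfold probEq
  exact Finset.sum_congr rfl fun ω' _ => if_congr (h ω' ω) rfl rfl

lemma entOf_congr {X : Ω → α} {X' : Ω → β} (h : ∀ ω ω', X ω = X ω' ↔ X' ω = X' ω') :
    entOf p X = entOf p X' := by
  unfold entOf
  simp only [probEq_congr_of_fiber h]

lemma entOf_const (hp1 : ∑ ω, p ω = 1) (c : α) : entOf p (fun _ => c) = 0 := by
  simp [entOf, probEq_const hp1 c]

lemma miOf_congr_left {X : Ω → α} {X' : Ω → β} (h : ∀ ω ω', X ω = X ω' ↔ X' ω = X' ω')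
    (B : Ω → γ) : miOf p X B = miOf p X' B := by
  unfold miOf
  rw [entOf_congr h, entOf_congr (X := fun ω => (X ω, B ω)) (X' := fun ω => (X' ω, B ω))
    fun ω ω' => by simp only [Prod.mk.injEq, h ω ω']]

lemma miOf_congr_right (A : Ω → α) {B : Ω → β} {B' : Ω → γ}
    (h : ∀ ω ω', B ω = B ω' ↔ B' ω = B' ω') : miOf p A B = miOf p A B' := by
  unfold miOf
  rw [entOf_congr h, entOf_congr (X := fun ω => (A ω, B ω)) (X' := fun ω => (A ω, B' ω))
    fun ω ω' => by simp only [Prod.mk.injEq, h ω ω']]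

lemma miOf_comm (X : Ω → α) (Y : Ω → β) : miOf p X Y = miOf p Y X := by
  unfold miOf
  rw [entOf_congr (X := fun ω => (X ω, Y ω)) (X' := fun ω => (Y ω, X ω))
    fun ω ω' => by simp only [Prod.mk.injEq, and_comm]]
  ring

lemma condMIOf_comm (X : Ω → α) (Y : Ω → β) (Z : Ω → γ) :
    condMIOf p X Y Z = condMIOf p Y X Z := by
  simp only [condMIOf, condEntOf]
  rw [entOf_congr (X := fun ω => ((X ω, Y ω), Z ω)) (X' := fun ω => ((Y ω, X ω), Z ω))
    fun ω ω' => by simp only [Prod.mk.injEq]; tauto]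
  ring

lemma miOf_pair_left (A : Ω → α) (C : Ω → γ) (B : Ω → β) :
    miOf p (fun ω => (A ω, C ω)) B = miOf p C B + condMIOf p A B C := by
  simp only [miOf, condMIOf, condEntOf]
  rw [entOf_congr (X := fun ω => (C ω, B ω)) (X' := fun ω => (B ω, C ω))
      fun ω ω' => by simp only [Prod.mk.injEq, and_comm],
    entOf_congr (X := fun ω => ((A ω, B ω), C ω)) (X' := fun ω => ((A ω, C ω), B ω))
      fun ω ω' => by simp only [Prod.mk.injEq]; tauto]
  ring

lemma miOf_pair_right (A : Ω → α) (B : Ω → β) (C : Ω → γ) :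
    miOf p A (fun ω => (B ω, C ω)) = miOf p A C + condMIOf p A B C := by
  rw [miOf_comm, miOf_pair_left, miOf_comm, condMIOf_comm]

lemma miOf_const_right (hp1 : ∑ ω, p ω = 1) (A : Ω → α) (c : β) :
    miOf p A (fun _ => c) = 0 := by
  unfold miOf
  rw [entOf_const hp1 c, entOf_congr (X := fun ω => (A ω, c)) (X' := A) fun ω ω' => by simp]
  ring

lemma sum_probEq_pair_le (hp : ∀ ω, 0 ≤ p ω) (X : Ω → α) (Z : Ω → γ) (A : Finset α) (c : γ) :
    ∑ a ∈ A, probEq p (fun ω => (X ω, Z ω)) (a, c) ≤ probEq p Z c := by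
  classical
  rw [← Finset.sum_image (g := fun a => (a, c)) fun _ _ _ _ h => (Prod.mk.inj h).1]
  exact sum_probEq_le hp _ Prod.snd fun w hw => by
    obtain ⟨a, -, rfl⟩ := Finset.mem_image.1 hw; rfl

lemma condMIOf_eq_neg_sum_logb (hp : ∀ ω, 0 ≤ p ω) (X : Ω → α) (Y : Ω → β) (Z : Ω → γ) :
    condMIOf p X Y Z = -∑ ω, p ω * Real.logb 2
      (probEq p (fun ω => (X ω, Z ω)) (X ω, Z ω) * probEq p (fun ω => (Y ω, Z ω)) (Y ω, Z ω)
        / (probEq p (fun ω => ((X ω, Y ω), Z ω)) ((X ω, Y ω), Z ω) * probEq p Z (Z ω))) := by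
  rw [sum_mul_congr_of_ne_zero fun ω hω => by
    rw [Real.logb_div (mul_pos (probEq_pos hp _ hω) (probEq_pos hp _ hω)).ne'
        (mul_pos (probEq_pos hp _ hω) (probEq_pos hp _ hω)).ne',
      Real.logb_mul (probEq_pos hp _ hω).ne' (probEq_pos hp _ hω).ne',
      Real.logb_mul (probEq_pos hp _ hω).ne' (probEq_pos hp _ hω).ne']]
  simp only [condMIOf, condEntOf, entOf, mul_add, mul_sub, Finset.sum_add_distrib,
    Finset.sum_sub_distrib]
  ring

lemma condMIOf_nonneg (hp : ∀ ω, 0 ≤ p ω) (hp1 : ∑ ω, p ω = 1)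
    (X : Ω → α) (Y : Ω → β) (Z : Ω → γ) : 0 ≤ condMIOf p X Y Z := by
  classical
  set W : Ω → (α × β) × γ := fun ω => ((X ω, Y ω), Z ω)
  set PXZ := probEq p (fun ω => (X ω, Z ω))
  set PYZ := probEq p (fun ω => (Y ω, Z ω))
  set G : (α × β) × γ → ℝ := fun w => PXZ (w.1.1, w.2) * PYZ (w.1.2, w.2) / probEq p Z w.2
  have hG : ∀ w, 0 ≤ G w := fun w => div_nonneg (mul_nonneg (probEq_nonneg hp _ _)
    (probEq_nonneg hp _ _)) (probEq_nonneg hp _ _)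
  set A := Finset.univ.image X
  set B := Finset.univ.image Y
  set C := Finset.univ.image Z
  have hfiber : ∀ c, ∑ ab ∈ A ×ˢ B, G (ab, c) ≤ probEq p Z c := fun c => by
    simp only [G, ← Finset.sum_div, Finset.sum_product, ← Finset.sum_mul_sum]
    exact div_le_of_le_mul₀ (probEq_nonneg hp _ _) (probEq_nonneg hp _ _)
      (mul_le_mul (sum_probEq_pair_le hp X Z A c) (sum_probEq_pair_le hp Y Z B c)
        (Finset.sum_nonneg fun _ _ => probEq_nonneg hp _ _) (probEq_nonneg hp _ _))
  have hbound : ∑ ω, p ω * (G (W ω) / probEq p W (W ω)) ≤ 1 :=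
    calc ∑ ω, p ω * (G (W ω) / probEq p W (W ω)) ≤ ∑ w ∈ Finset.univ.image W, G w :=
          sum_mul_div_probEq_le hp W G hG
      _ ≤ ∑ w ∈ (A ×ˢ B) ×ˢ C, G w := Finset.sum_le_sum_of_subset_of_nonneg
          (fun w hw => by
            obtain ⟨ω, -, rfl⟩ := Finset.mem_image.1 hw
            simp [A, B, C, W])
          fun w _ _ => hG w
      _ = ∑ c ∈ C, ∑ ab ∈ A ×ˢ B, G (ab, c) := by rw [Finset.sum_product, Finset.sum_comm]
      _ ≤ ∑ c ∈ C, probEq p Z c := Finset.sum_le_sum fun c _ => hfiber c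
      _ ≤ 1 := sum_probEq_le_one hp hp1 Z C
  rw [condMIOf_eq_neg_sum_logb hp, neg_nonneg]
  refine sum_mul_logb_nonpos hp hp1 (fun ω hω => div_pos (mul_pos (probEq_pos hp _ hω)
    (probEq_pos hp _ hω)) (mul_pos (probEq_pos hp _ hω) (probEq_pos hp _ hω))) ?_
  convert hbound using 3 with ω
  simp only [G, W, PXZ, PYZ]
  ring

lemma miOf_nonneg (hp : ∀ ω, 0 ≤ p ω) (hp1 : ∑ ω, p ω = 1) (X : Ω → α) (Y : Ω → β) :
    0 ≤ miOf p X Y := by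
  have h : condMIOf p X Y (fun _ => ()) = miOf p X Y := by
    simp only [condMIOf, condEntOf, miOf, entOf_const hp1]
    rw [entOf_congr (X := fun ω => (X ω, ())) (X' := X) fun _ _ => by simp,
      entOf_congr (X := fun ω => (Y ω, ())) (X' := Y) fun _ _ => by simp,
      entOf_congr (X := fun ω => ((X ω, Y ω), ())) (X' := fun ω => (X ω, Y ω)) fun _ _ => by simp]
    ring
  exact h ▸ condMIOf_nonneg hp hp1 X Y _

lemma condMIOf_le_miOf_pair (hp : ∀ ω, 0 ≤ p ω) (hp1 : ∑ ω, p ω = 1)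
    (A : Ω → α) (B : Ω → β) (C : Ω → γ) : condMIOf p A B C ≤ miOf p (fun ω => (A ω, C ω)) B := by
  rw [miOf_pair_left]
  linarith [miOf_nonneg hp hp1 C B]

lemma miOf_comp_le (hp : ∀ ω, 0 ≤ p ω) (hp1 : ∑ ω, p ω = 1)
    (A : Ω → α) (B : Ω → β) (f : α → γ) : miOf p (fun ω => f (A ω)) B ≤ miOf p A B := by
  rw [miOf_congr_left (X' := fun ω => (A ω, f (A ω)))
    (fun ω ω' => ⟨fun h => by rw [h], fun h => (Prod.mk.inj h).1⟩) B, miOf_pair_left]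
  linarith [condMIOf_nonneg hp hp1 A B fun ω => f (A ω)]

end Information

section Prefix

variable {γ : Type*} {n : ℕ}

/-- `prefixOf z t` is the paper's `z^{t-1}` (times are counted from `0` here). -/
def prefixOf (z : Fin n → γ) (m : ℕ) : Fin n → Option γ :=
  fun s => if (s : ℕ) < m then some (z s) else none

lemma prefixOf_zero (z : Fin n → γ) : prefixOf z 0 = fun _ => none :=
  funext fun _ => if_neg (Nat.not_lt_zero _)

lemma prefixOf_len_eq_iff {z z' : Fin n → γ} : prefixOf z n = prefixOf z' n ↔ z = z' := by
  simp [prefixOf, funext_iff]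

lemma prefixOf_succ_eq_iff {z z' : Fin n → γ} (t : Fin n) :
    prefixOf z (t + 1) = prefixOf z' (t + 1) ↔
      (z t, prefixOf z t) = (z' t, prefixOf z' t) := by
  simp only [prefixOf, funext_iff, Prod.mk.injEq]
  constructor
  · intro h
    refine ⟨by simpa using h t, fun s => ?_⟩
    split_ifs with hs
    · simpa [Nat.lt_succ_of_lt hs] using h s
    · rfl
  · rintro ⟨ht, h⟩ s
    by_cases hs : (s : ℕ) < t
    · simpa [hs, Nat.lt_succ_of_lt hs] using h s
    · by_cases hst : (s : ℕ) = t
      · simp [show s = t from Fin.ext hst, ht]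
      · simp [show ¬ (s : ℕ) < t + 1 by omega]

end Prefix

section ChainRule

variable {Ω α γ : Type*} [Fintype Ω] {p : Ω → ℝ} {n : ℕ}

lemma miOf_eq_sum_condMIOf_prefixOf (hp1 : ∑ ω, p ω = 1) (A : Ω → α) (Z : Ω → Fin n → γ) :
    miOf p A Z = ∑ t : Fin n, condMIOf p A (fun ω => Z ω t) (fun ω => prefixOf (Z ω) t) := by
  set f : ℕ → ℝ := fun m => miOf p A fun ω => prefixOf (Z ω) m
  have hstep : ∀ t : Fin n, condMIOf p A (fun ω => Z ω t) (fun ω => prefixOf (Z ω) t)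
      = f (t + 1) - f t := fun t => by
    rw [eq_sub_iff_add_eq', ← miOf_pair_right]
    exact miOf_congr_right A fun ω ω' => (prefixOf_succ_eq_iff t).symm
  have hlen : f n = miOf p A Z := miOf_congr_right A fun _ _ => prefixOf_len_eq_iff
  have hzero : f 0 = 0 := by
    simp only [f, prefixOf_zero]
    exact miOf_const_right hp1 A _
  rw [Finset.sum_congr rfl fun t _ => hstep t,
    Fin.sum_univ_eq_sum_range (fun m => f (m + 1) - f m), Finset.sum_range_sub, hlen, hzero,
    sub_zero]

end ChainRule

def pmfProd {Ω₁ Ω₂ : Type*} (p₁ : Ω₁ → ℝ) (p₂ : Ω₂ → ℝ) : Ω₁ × Ω₂ → ℝ :=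
  fun ω => p₁ ω.1 * p₂ ω.2

lemma pmfProd_nonneg {Ω₁ Ω₂ : Type*} {p₁ : Ω₁ → ℝ} {p₂ : Ω₂ → ℝ} (hp₁ : ∀ ω, 0 ≤ p₁ ω)
    (hp₂ : ∀ ω, 0 ≤ p₂ ω) (ω : Ω₁ × Ω₂) : 0 ≤ pmfProd p₁ p₂ ω :=
  mul_nonneg (hp₁ _) (hp₂ _)

section Product

variable {Ω₁ Ω₂ α β : Type*} [Fintype Ω₁] [Fintype Ω₂] {p₁ : Ω₁ → ℝ} {p₂ : Ω₂ → ℝ}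

lemma sum_pmfProd_mul_fst (hp₂1 : ∑ ω, p₂ ω = 1) (f : Ω₁ → ℝ) :
    ∑ ω, pmfProd p₁ p₂ ω * f ω.1 = ∑ ω, p₁ ω * f ω := by
  simp only [pmfProd, Fintype.sum_prod_type, mul_right_comm _ _ (f _), ← Finset.mul_sum, hp₂1,
    mul_one]

lemma sum_pmfProd (hp₁1 : ∑ ω, p₁ ω = 1) (hp₂1 : ∑ ω, p₂ ω = 1) : ∑ ω, pmfProd p₁ p₂ ω = 1 := by
  simpa [hp₁1] using sum_pmfProd_mul_fst (p₁ := p₁) hp₂1 fun _ => 1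

lemma probEq_pmfProd_fst (hp₂1 : ∑ ω, p₂ ω = 1) (X : Ω₁ → α) (a : α) :
    probEq (pmfProd p₁ p₂) (fun ω => X ω.1) a = probEq p₁ X a := by
  classical
  simpa [probEq, ite_zero_mul] using sum_pmfProd_mul_fst (p₁ := p₁) hp₂1
    fun ω => if X ω = a then 1 else 0

lemma probEq_pmfProd_snd (hp₁1 : ∑ ω, p₁ ω = 1) (X : Ω₂ → α) (a : α) :
    probEq (pmfProd p₁ p₂) (fun ω => X ω.2) a = probEq p₂ X a := by
  simp only [probEq, pmfProd, Fintype.sum_prod_type_right]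
  refine Finset.sum_congr rfl fun ω _ => ?_
  split_ifs <;> simp [← Finset.sum_mul, hp₁1]

lemma entOf_pmfProd_fst (hp₂1 : ∑ ω, p₂ ω = 1) (X : Ω₁ → α) :
    entOf (pmfProd p₁ p₂) (fun ω => X ω.1) = entOf p₁ X := by
  simp only [entOf, probEq_pmfProd_fst hp₂1]
  rw [sum_pmfProd_mul_fst hp₂1 fun ω => Real.logb 2 (probEq p₁ X (X ω))]

lemma miOf_pmfProd_fst (hp₂1 : ∑ ω, p₂ ω = 1) (X : Ω₁ → α) (B : Ω₁ → β) :
    miOf (pmfProd p₁ p₂) (fun ω => X ω.1) (fun ω => B ω.1) = miOf p₁ X B := by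
  simp only [miOf]
  rw [entOf_pmfProd_fst hp₂1, entOf_pmfProd_fst hp₂1,
    entOf_pmfProd_fst hp₂1 (X := fun ω => (X ω, B ω))]

lemma probEq_pmfProd_pair_snd (X : Ω₁ × Ω₂ → α) (a : α) (t : Ω₂) :
    probEq (pmfProd p₁ p₂) (fun ω => (X ω, ω.2)) (a, t)
      = p₂ t * probEq p₁ (fun y => X (y, t)) a := by
  classical
  simp only [probEq, pmfProd, Fintype.sum_prod_type, Prod.mk.injEq, Finset.mul_sum]
  refine Finset.sum_congr rfl fun y _ => ?_
  rw [Finset.sum_eq_single t (fun t' _ ht' => if_neg fun h => ht' h.2) (by simp)]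
  simp only [and_true]
  split_ifs <;> ring

lemma condEntOf_pmfProd_snd (hp₁ : ∀ ω, 0 ≤ p₁ ω) (hp₁1 : ∑ ω, p₁ ω = 1)
    (X : Ω₁ × Ω₂ → α) :
    condEntOf (pmfProd p₁ p₂) X Prod.snd = ∑ t, p₂ t * entOf p₁ (fun y => X (y, t)) := by
  have hT : ∀ t, probEq (pmfProd p₁ p₂) Prod.snd t = p₂ t := fun t => by
    rw [show (Prod.snd : Ω₁ × Ω₂ → Ω₂) = fun ω => id ω.2 from rfl, probEq_pmfProd_snd hp₁1]
    classical
    simp [probEq]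
  have hXT : entOf (pmfProd p₁ p₂) (fun ω => (X ω, ω.2))
      = -∑ ω, pmfProd p₁ p₂ ω * (Real.logb 2 (p₂ ω.2)
          + Real.logb 2 (probEq p₁ (fun y => X (y, ω.2)) (X ω))) := by
    rw [entOf, sum_mul_congr_of_ne_zero fun ω hω => ?_]
    obtain ⟨h₁, h₂⟩ := mul_ne_zero_iff.1 hω
    rw [probEq_pmfProd_pair_snd,
      Real.logb_mul h₂ (probEq_pos hp₁ (fun y => X (y, ω.2)) h₁).ne']
  have hsplit : ∑ ω, pmfProd p₁ p₂ ω * Real.logb 2 (probEq p₁ (fun y => X (y, ω.2)) (X ω))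
      = ∑ t, p₂ t * ∑ y, p₁ y * Real.logb 2 (probEq p₁ (fun y => X (y, t)) (X (y, t))) := by
    simp only [pmfProd, Fintype.sum_prod_type_right, Finset.mul_sum]
    exact Finset.sum_congr rfl fun _ _ => Finset.sum_congr rfl fun _ _ => by ring
  rw [condEntOf, hXT, entOf]
  simp only [hT, mul_add, Finset.sum_add_distrib, hsplit, entOf, mul_neg, Finset.sum_neg_distrib]
  ring

end Product

section SingleLetter

variable {Ω α β γ : Type*} [Fintype Ω] {p : Ω → ℝ}

lemma condMIOf_pmfProd_snd {T : Type*} [Fintype T] {q : T → ℝ} (hp : ∀ ω, 0 ≤ p ω)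
    (hp1 : ∑ ω, p ω = 1) (A : Ω × T → α) (B : Ω × T → β) :
    condMIOf (pmfProd p q) A B Prod.snd
      = ∑ t, q t * miOf p (fun y => A (y, t)) (fun y => B (y, t)) := by
  simp only [condMIOf, condEntOf_pmfProd_snd hp hp1, miOf, mul_add, mul_sub,
    Finset.sum_add_distrib, Finset.sum_sub_distrib]

lemma miOf_le_mul_miOf_timeSharing (hp : ∀ ω, 0 ≤ p ω) (hp1 : ∑ ω, p ω = 1) {n : ℕ}
    (hn : 0 < n) (A : Ω → α) (Z : Ω → Fin n → γ) (V : Ω × Fin n → β)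
    (h : β → Fin n → Option γ) (hV : ∀ y t, h (V (y, t)) = prefixOf (Z y) t) :
    miOf p A Z ≤ n * miOf (pmfProd p fun _ => (n : ℝ)⁻¹) (fun ω => (A ω.1, V ω, ω.2))
      (fun ω => Z ω.1 ω.2) := by
  have hn' : (n : ℝ) ≠ 0 := by exact_mod_cast hn.ne'
  have hunif : ∑ _t : Fin n, (n : ℝ)⁻¹ = 1 := by simp [hn']
  have hletter : ∀ t, condMIOf p A (fun ω => Z ω t) (fun ω => prefixOf (Z ω) t)
      ≤ miOf p (fun y => (A y, V (y, t))) (fun y => Z y t) := fun t =>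
    calc condMIOf p A (fun ω => Z ω t) (fun ω => prefixOf (Z ω) t)
        ≤ miOf p (fun y => (A y, prefixOf (Z y) t)) (fun y => Z y t) :=
          condMIOf_le_miOf_pair hp hp1 _ _ _
      _ = miOf p (fun y => ((A y, V (y, t)).1, h (A y, V (y, t)).2)) (fun y => Z y t) := by
          simp only [hV]
      _ ≤ miOf p (fun y => (A y, V (y, t))) (fun y => Z y t) :=
          miOf_comp_le hp hp1 (fun y => (A y, V (y, t))) _ fun x => (x.1, h x.2)
  calc miOf p A Z
      = ∑ t : Fin n, condMIOf p A (fun ω => Z ω t) (fun ω => prefixOf (Z ω) t) :=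
        miOf_eq_sum_condMIOf_prefixOf hp1 A Z
    _ ≤ ∑ t, miOf p (fun y => (A y, V (y, t))) (fun y => Z y t) :=
        Finset.sum_le_sum fun t _ => hletter t
    _ = n * condMIOf (pmfProd p fun _ => (n : ℝ)⁻¹) (fun ω => (A ω.1, V ω))
          (fun ω => Z ω.1 ω.2) Prod.snd := by
        rw [condMIOf_pmfProd_snd hp hp1, ← Finset.mul_sum, ← mul_assoc, mul_inv_cancel₀ hn',
          one_mul]
    _ ≤ n * miOf (pmfProd p fun _ => (n : ℝ)⁻¹) (fun ω => ((A ω.1, V ω), ω.2))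
          (fun ω => Z ω.1 ω.2) :=
        mul_le_mul_of_nonneg_left (condMIOf_le_miOf_pair
          (pmfProd_nonneg hp fun _ => by positivity) (sum_pmfProd hp1 hunif) _ _ _)
          (Nat.cast_nonneg n)
    _ = n * miOf (pmfProd p fun _ => (n : ℝ)⁻¹) (fun ω => (A ω.1, V ω, ω.2))
          (fun ω => Z ω.1 ω.2) := by
        rw [miOf_congr_left (X' := fun ω => (A ω.1, V ω, ω.2)) fun ω ω' => by
          simp only [Prod.mk.injEq, and_assoc]]

end SingleLetter

/-- `D(P_X ‖ P_{X'})`, with both laws realised on one finite space so that the common codomain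
(messages live in `ℕ`) need not be finite. -/
def klDivOf {Ω α : Type*} [Fintype Ω] (p : Ω → ℝ) (X X' : Ω → α) : ℝ :=
  ∑ ω, p ω * Real.logb 2 (probEq p X (X ω) / probEq p X' (X ω))

section Divergence

variable {Ω α β : Type*} [Fintype Ω] {p : Ω → ℝ}

lemma klDivOf_eq_zero_of_probEq_eq {X X' : Ω → α} (h : ∀ a, probEq p X a = probEq p X' a) :
    klDivOf p X X' = 0 :=
  Finset.sum_eq_zero fun ω _ => by
    rw [h]
    by_cases h0 : probEq p X' (X ω) = 0
    · simp [h0]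
    · simp [div_self h0]

lemma miOf_eq_sum_logb (hp : ∀ ω, 0 ≤ p ω) (X : Ω → α) (Y : Ω → β) :
    miOf p X Y = ∑ ω, p ω * Real.logb 2
      (probEq p (fun ω => (X ω, Y ω)) (X ω, Y ω) / (probEq p X (X ω) * probEq p Y (Y ω))) := by
  rw [sum_mul_congr_of_ne_zero fun ω hω => by
    rw [Real.logb_div (probEq_pos hp _ hω).ne'
        (mul_pos (probEq_pos hp _ hω) (probEq_pos hp _ hω)).ne',
      Real.logb_mul (probEq_pos hp _ hω).ne' (probEq_pos hp _ hω).ne']]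
  simp only [miOf, entOf, mul_sub, mul_add, Finset.sum_sub_distrib, Finset.sum_add_distrib]
  ring

lemma klDivOf_pair (hp : ∀ ω, 0 ≤ p ω) (X X' : Ω → α) (Y Y' : Ω → β)
    (hind : ∀ a b, probEq p (fun ω => (X' ω, Y' ω)) (a, b) = probEq p X' a * probEq p Y' b)
    (hlaw : ∀ b, probEq p Y' b = probEq p Y b)
    (habs : ∀ ω, p ω ≠ 0 → probEq p X' (X ω) ≠ 0) :
    klDivOf p (fun ω => (X ω, Y ω)) (fun ω => (X' ω, Y' ω)) = miOf p X Y + klDivOf p X X' := by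
  rw [miOf_eq_sum_logb hp, klDivOf, klDivOf, ← Finset.sum_add_distrib]
  refine Finset.sum_congr rfl fun ω _ => ?_
  by_cases hω : p ω = 0
  · simp [hω]
  have hX' : 0 < probEq p X' (X ω) := (probEq_nonneg hp _ _).lt_of_ne' (habs ω hω)
  rw [← mul_add, hind, hlaw, ← Real.logb_mul
    (div_pos (probEq_pos hp _ hω) (mul_pos (probEq_pos hp _ hω) (probEq_pos hp _ hω))).ne'
    (div_pos (probEq_pos hp _ hω) hX').ne']
  congr 2
  field_simp [(probEq_pos hp X hω).ne']

/-- The log-sum inequality behind data processing. -/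
lemma sum_probEq_comp_mul_div_le_one (hp : ∀ ω, 0 ≤ p ω) (hp1 : ∑ ω, p ω = 1) [DecidableEq α]
    (X X' : Ω → α) (f : α → β) :
    ∑ a ∈ Finset.univ.image X, probEq p (fun ω => f (X ω)) (f a) * probEq p X' a
      / probEq p (fun ω => f (X' ω)) (f a) ≤ 1 := by
  classical
  set PfX := probEq p fun ω => f (X ω)
  set PfX' := probEq p fun ω => f (X' ω)
  set S := Finset.univ.image X
  have hfiber : ∀ b, ∑ a ∈ S with f a = b, PfX (f a) * probEq p X' a / PfX' (f a) ≤ PfX b :=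
    fun b => by
      rw [Finset.sum_congr rfl fun a ha => show PfX (f a) * probEq p X' a / PfX' (f a)
        = PfX b / PfX' b * probEq p X' a by rw [(Finset.mem_filter.1 ha).2]; ring,
        ← Finset.mul_sum, div_mul_eq_mul_div]
      exact div_le_of_le_mul₀ (probEq_nonneg hp _ _) (probEq_nonneg hp _ _)
        (mul_le_mul_of_nonneg_left (sum_probEq_le hp X' f fun a ha => (Finset.mem_filter.1 ha).2)
          (probEq_nonneg hp _ _))
  calc ∑ a ∈ S, PfX (f a) * probEq p X' a / PfX' (f a)
      = ∑ b ∈ S.image f, ∑ a ∈ S with f a = b, PfX (f a) * probEq p X' a / PfX' (f a) :=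
        (Finset.sum_fiberwise_of_maps_to (fun a ha => Finset.mem_image_of_mem f ha) _).symm
    _ ≤ ∑ b ∈ S.image f, PfX b := Finset.sum_le_sum fun b _ => hfiber b
    _ ≤ 1 := sum_probEq_le_one hp hp1 _ _

lemma klDivOf_comp_le (hp : ∀ ω, 0 ≤ p ω) (hp1 : ∑ ω, p ω = 1) (X X' : Ω → α) (f : α → β)
    (habs : ∀ ω, p ω ≠ 0 → probEq p X' (X ω) ≠ 0) :
    klDivOf p (fun ω => f (X ω)) (fun ω => f (X' ω)) ≤ klDivOf p X X' := by
  classical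
  set PfX := probEq p fun ω => f (X ω)
  set PfX' := probEq p fun ω => f (X' ω)
  have hX' : ∀ ω, p ω ≠ 0 → 0 < probEq p X' (X ω) := fun ω hω =>
    (probEq_nonneg hp _ _).lt_of_ne' (habs ω hω)
  have hfX' : ∀ ω, p ω ≠ 0 → 0 < PfX' (f (X ω)) := fun ω hω =>
    (hX' ω hω).trans_le (probEq_le_probEq_comp hp X' f _)
  set G : α → ℝ := fun a => PfX (f a) * probEq p X' a / PfX' (f a)
  have hgibbs := sum_mul_logb_nonpos hp hp1 (fun ω hω => div_pos (div_pos (mul_pos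
    (probEq_pos hp (fun ω => f (X ω)) hω) (hX' ω hω)) (hfX' ω hω)) (probEq_pos hp X hω))
    ((sum_mul_div_probEq_le hp X G fun a => div_nonneg (mul_nonneg (probEq_nonneg hp _ _)
      (probEq_nonneg hp _ _)) (probEq_nonneg hp _ _)).trans
      (sum_probEq_comp_mul_div_le_one hp hp1 X X' f))
  have hdiff : klDivOf p (fun ω => f (X ω)) (fun ω => f (X' ω)) - klDivOf p X X'
      = ∑ ω, p ω * Real.logb 2 (G (X ω) / probEq p X (X ω)) := by
    rw [klDivOf, klDivOf, ← Finset.sum_sub_distrib]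
    refine Finset.sum_congr rfl fun ω _ => ?_
    by_cases hω : p ω = 0
    · simp [hω]
    rw [← mul_sub, ← Real.logb_div (div_pos (probEq_pos hp (fun ω => f (X ω)) hω)
      (hfX' ω hω)).ne' (div_pos (probEq_pos hp X hω) (hX' ω hω)).ne']
    congr 2
    simp only [G, PfX, PfX', div_div_eq_mul_div]
    ring
  linarith

end Divergence

def margProd {ι : Type*} [Fintype ι] [DecidableEq ι] {W : ι → Type*} [∀ i, Fintype (W i)]
    (p : (∀ i, W i) → ℝ) : (∀ i, W i) → ℝ :=
  fun ys => ∏ i, probEq p (fun ys => ys i) (ys i)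

section MargProd

variable {ι α : Type*} [Fintype ι] [DecidableEq ι] {W : ι → Type*} [∀ i, Fintype (W i)]
  {p : (∀ i, W i) → ℝ}

lemma margProd_nonneg (hp : ∀ ω, 0 ≤ p ω) (ys : ∀ i, W i) : 0 ≤ margProd p ys :=
  Finset.prod_nonneg fun _ _ => probEq_nonneg hp _ _

lemma margProd_pos (hp : ∀ ω, 0 ≤ p ω) {ys : ∀ i, W i} (hys : p ys ≠ 0) : 0 < margProd p ys :=
  Finset.prod_pos fun i _ => probEq_pos hp (fun ys => ys i) hys

lemma sum_margProd (hp1 : ∑ ω, p ω = 1) : ∑ ys, margProd p ys = 1 := by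
  simp only [margProd, ← Fintype.prod_sum, sum_probEq, hp1, Finset.prod_const_one]

lemma probEq_margProd_pair (hp1 : ∑ ω, p ω = 1) (F : (∀ i, W i) → α) (j : ι)
    (hF : ∀ ys ys', (∀ i, i ≠ j → ys i = ys' i) → F ys = F ys') (m : α) (s : W j) :
    probEq (margProd p) (fun ys => (F ys, ys j)) (m, s)
      = probEq (margProd p) F m * probEq p (fun ys => ys j) s := by
  classical
  set e := Equiv.piSplitAt j W
  set q := fun i => probEq p fun ys : ∀ i, W i => ys i
  have hq : ∑ v, q j v = 1 := (sum_probEq _).trans hp1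
  have he : ∀ v r, e.symm (v, r) j = v := fun v r => by simp [e]
  have hmarg : ∀ v r, margProd p (e.symm (v, r)) = q j v * ∏ i : {i // i ≠ j}, q i (r i) := by
    intro v r
    rw [margProd, Fintype.prod_eq_mul_prod_subtype_ne _ j, he]
    exact congrArg _ (Finset.prod_congr rfl fun i _ => by simp [e, i.2]; rfl)
  have hFe : ∀ v r, F (e.symm (v, r)) = F (e.symm (s, r)) := fun v r =>
    hF _ _ fun i hi => by simp [e, hi]
  have hsum : ∀ G : (∀ i, W i) → ℝ, ∑ ys, G ys = ∑ v, ∑ r, G (e.symm (v, r)) := fun G => by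
    rw [← e.symm.sum_comp, Fintype.sum_prod_type]
  set R := ∑ r, if F (e.symm (s, r)) = m then ∏ i : {i // i ≠ j}, q i (r i) else 0
  have hpair : probEq (margProd p) (fun ys => (F ys, ys j)) (m, s) = q j s * R := by
    simp only [probEq, hsum, hmarg, he, hFe, Prod.mk.injEq, R, Finset.mul_sum]
    rw [Finset.sum_eq_single s (fun v _ hv => by simp [hv]) (by simp)]
    simp only [and_true, mul_ite, mul_zero]
  have hF' : probEq (margProd p) F m = R := by
    simp only [probEq, hsum, hmarg, hFe, R]
    rw [Finset.sum_comm]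
    refine Finset.sum_congr rfl fun r _ => ?_
    split_ifs
    · rw [← Finset.sum_mul, hq, one_mul]
    · simp
  rw [hpair, hF', mul_comm]

lemma probEq_margProd_coord (hp1 : ∑ ω, p ω = 1) (j : ι) (s : W j) :
    probEq (margProd p) (fun ys => ys j) s = probEq p (fun ys => ys j) s := by
  have h := probEq_margProd_pair hp1 (fun _ => ()) j (fun _ _ _ => rfl) () s
  rw [probEq_const (sum_margProd hp1), one_mul] at h
  rw [← h]
  exact Finset.sum_congr rfl fun _ _ => by split_ifs <;> simp_all

end MargProd

section Messages

variable {k : ℕ} {Y : ℕ → Type} [∀ i, Fintype (Y i)] [∀ i, Nonempty (Y i)] {n : ℕ}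
  (φ : ∀ ℓ : ℕ, (Fin n → Y ℓ) → ℕ → ℕ)

/-- `msgOf φ r` is the paper's `M_{r+1}`. -/
def msgOf (r : ℕ) (ys : ∀ i : Fin (k + 1), Fin n → Y i) : ℕ :=
  msgRec Y n φ (extendTup k Y n ys) r

omit [∀ i, Fintype (Y i)] in
lemma extendTup_of_lt (ys : ∀ i : Fin (k + 1), Fin n → Y i) {ℓ : ℕ} (h : ℓ < k + 1) :
    extendTup k Y n ys ℓ = ys ⟨ℓ, h⟩ :=
  dif_pos h

omit [∀ i, Fintype (Y i)] [∀ i, Nonempty (Y i)] in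
lemma msgRec_congr {ys ys' : ∀ ℓ : ℕ, Fin n → Y ℓ} :
    ∀ r, (∀ ℓ ≤ r, ys ℓ = ys' ℓ) → msgRec Y n φ ys r = msgRec Y n φ ys' r
  | 0, h => by rw [msgRec, msgRec, h 0 le_rfl]
  | r + 1, h => by
    rw [msgRec, msgRec, h (r + 1) le_rfl, msgRec_congr r fun ℓ hℓ => h ℓ (hℓ.trans r.le_succ)]

omit [∀ i, Fintype (Y i)] in
lemma msgOf_succ (r : ℕ) (ys : ∀ i : Fin (k + 1), Fin n → Y i) :
    msgOf φ (r + 1) ys = φ (r + 1) (extendTup k Y n ys (r + 1)) (msgOf φ r ys) :=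
  rfl

omit [∀ i, Fintype (Y i)] in
lemma msgOf_congr {r : ℕ} {ys ys' : ∀ i : Fin (k + 1), Fin n → Y i}
    (h : ∀ i : Fin (k + 1), (i : ℕ) ≤ r → ys i = ys' i) : msgOf φ r ys = msgOf φ r ys' :=
  msgRec_congr φ r fun ℓ hℓ => by
    unfold extendTup
    split_ifs with hℓk
    · exact h _ hℓ
    · rfl

end Messages

section Coupling

variable {k : ℕ} {Y : ℕ → Type} [∀ i, Fintype (Y i)] [∀ i, Nonempty (Y i)] {n : ℕ}
  (φ : ∀ ℓ : ℕ, (Fin n → Y ℓ) → ℕ → ℕ) {p : (∀ i : Fin (k + 1), Fin n → Y i) → ℝ}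

omit [∀ i, Nonempty (Y i)] in
lemma probEq_coupling_snd_ne_zero {α : Type*} (hp : ∀ ω, 0 ≤ p ω) (hp1 : ∑ ω, p ω = 1)
    (Φ : (∀ i : Fin (k + 1), Fin n → Y i) → α) {ω} (hω : pmfProd p (margProd p) ω ≠ 0) :
    probEq (pmfProd p (margProd p)) (fun ω => Φ ω.2) (Φ ω.1) ≠ 0 := by
  rw [probEq_pmfProd_snd hp1]
  exact ((margProd_pos hp (left_ne_zero_of_mul hω)).trans_le
    (le_probEq_self (margProd_nonneg hp) Φ ω.1)).ne'

lemma probEq_coupling_extendTup (hp1 : ∑ ω, p ω = 1) {ℓ : ℕ} (h : ℓ < k + 1)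
    (b : Fin n → Y ℓ) :
    probEq (pmfProd p (margProd p)) (fun ω => extendTup k Y n ω.2 ℓ) b
      = probEq (pmfProd p (margProd p)) (fun ω => extendTup k Y n ω.1 ℓ) b := by
  rw [probEq_pmfProd_snd hp1 (fun ys => extendTup k Y n ys ℓ),
    probEq_pmfProd_fst (sum_margProd hp1) (fun ys => extendTup k Y n ys ℓ)]
  simp only [extendTup_of_lt _ h]
  exact probEq_margProd_coord hp1 ⟨ℓ, h⟩ b

lemma probEq_coupling_msgOf_extendTup (hp1 : ∑ ω, p ω = 1) {r : ℕ} (h : r + 1 < k + 1)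
    (a : ℕ) (b : Fin n → Y (r + 1)) :
    probEq (pmfProd p (margProd p)) (fun ω => (msgOf φ r ω.2, extendTup k Y n ω.2 (r + 1))) (a, b)
      = probEq (pmfProd p (margProd p)) (fun ω => msgOf φ r ω.2) a
        * probEq (pmfProd p (margProd p)) (fun ω => extendTup k Y n ω.2 (r + 1)) b := by
  rw [probEq_pmfProd_snd hp1 (fun ys => (msgOf φ r ys, extendTup k Y n ys (r + 1))),
    probEq_pmfProd_snd hp1 (msgOf φ r),
    probEq_pmfProd_snd hp1 (fun ys => extendTup k Y n ys (r + 1))]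
  simp only [extendTup_of_lt _ h]
  rw [probEq_margProd_coord hp1 ⟨r + 1, h⟩]
  exact probEq_margProd_pair hp1 (msgOf φ r) ⟨r + 1, h⟩ (fun ys ys' hys => msgOf_congr φ
    fun i hi => hys i fun hij => by simp [hij] at hi) a b

lemma klDivOf_coupling_msgOf_extendTup (hp : ∀ ω, 0 ≤ p ω) (hp1 : ∑ ω, p ω = 1) {r : ℕ}
    (h : r + 1 < k + 1) :
    klDivOf (pmfProd p (margProd p)) (fun ω => (msgOf φ r ω.1, extendTup k Y n ω.1 (r + 1)))
        (fun ω => (msgOf φ r ω.2, extendTup k Y n ω.2 (r + 1)))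
      = miOf p (msgOf φ r) (fun ys => extendTup k Y n ys (r + 1))
        + klDivOf (pmfProd p (margProd p)) (fun ω => msgOf φ r ω.1) (fun ω => msgOf φ r ω.2) := by
  rw [klDivOf_pair (pmfProd_nonneg hp (margProd_nonneg hp)) _ _ _ _
      (probEq_coupling_msgOf_extendTup φ hp1 h) (probEq_coupling_extendTup hp1 h)
      fun ω hω => probEq_coupling_snd_ne_zero hp hp1 _ hω,
    miOf_pmfProd_fst (sum_margProd hp1) (msgOf φ r) fun ys => extendTup k Y n ys (r + 1)]

lemma klDivOf_coupling_msgOf_le (hp : ∀ ω, 0 ≤ p ω) (hp1 : ∑ ω, p ω = 1) :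
    ∀ m, m < k + 1 →
      klDivOf (pmfProd p (margProd p)) (fun ω => msgOf φ m ω.1) (fun ω => msgOf φ m ω.2)
        ≤ ∑ r ∈ Finset.range m, miOf p (msgOf φ r) (fun ys => extendTup k Y n ys (r + 1))
  | 0, h => by
    have hlaw := klDivOf_eq_zero_of_probEq_eq fun b => (probEq_coupling_extendTup hp1 h b).symm
    have hdpi := klDivOf_comp_le (pmfProd_nonneg hp (margProd_nonneg hp))
      (sum_pmfProd hp1 (sum_margProd hp1)) _ _ (fun y => φ 0 y 0)
      fun ω hω => probEq_coupling_snd_ne_zero hp hp1 (fun ys => extendTup k Y n ys 0) hω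
    rw [Finset.sum_range_zero]
    exact hdpi.trans hlaw.le
  | r + 1, h => by
    simp only [msgOf_succ]
    calc _ ≤ klDivOf (pmfProd p (margProd p))
          (fun ω => (msgOf φ r ω.1, extendTup k Y n ω.1 (r + 1)))
          (fun ω => (msgOf φ r ω.2, extendTup k Y n ω.2 (r + 1))) :=
          klDivOf_comp_le (pmfProd_nonneg hp (margProd_nonneg hp))
            (sum_pmfProd hp1 (sum_margProd hp1)) _ _ (fun x => φ (r + 1) x.2 x.1)
            fun ω hω => probEq_coupling_snd_ne_zero hp hp1
              (fun ys => (msgOf φ r ys, extendTup k Y n ys (r + 1))) hω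
      _ = miOf p (msgOf φ r) (fun ys => extendTup k Y n ys (r + 1))
          + klDivOf (pmfProd p (margProd p)) (fun ω => msgOf φ r ω.1) (fun ω => msgOf φ r ω.2) :=
          klDivOf_coupling_msgOf_extendTup φ hp hp1 h
      _ ≤ miOf p (msgOf φ r) (fun ys => extendTup k Y n ys (r + 1))
          + ∑ r ∈ Finset.range r, miOf p (msgOf φ r) (fun ys => extendTup k Y n ys (r + 1)) := by
          linarith [klDivOf_coupling_msgOf_le hp hp1 r (by omega)]
      _ = _ := by rw [Finset.sum_range_succ]; exact add_comm _ _

end Coupling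

section ChangeOfMeasure

variable {k : ℕ} {Y : ℕ → Type} [∀ i, Fintype (Y i)] [∀ i, Nonempty (Y i)]
  {P : (∀ i : Fin (k + 1), Y i) → ℝ} {n : ℕ} {φ : ∀ ℓ : ℕ, (Fin n → Y ℓ) → ℕ → ℕ}
  {g : (Fin n → Y k) → ℕ → Bool}

lemma ptildeCM_nonneg (hP : ∀ y, 0 ≤ P y) (ys : ∀ i : Fin (k + 1), Fin n → Y i) :
    0 ≤ ptildeCM k Y P n φ g ys := by
  have hiid : ∀ ys, 0 ≤ iidK k Y P n ys := fun _ => Finset.prod_nonneg fun _ _ => hP _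
  unfold ptildeCM
  split_ifs
  · exact div_nonneg (hiid ys) (Finset.sum_nonneg fun ys _ => by split_ifs <;> simp [hiid ys])
  · exact le_rfl

lemma sum_ptildeCM (hΔ : DeltaCM k Y P n φ g ≠ 0) : ∑ ys, ptildeCM k Y P n φ g ys = 1 := by
  classical
  calc ∑ ys, ptildeCM k Y P n φ g ys
      = (∑ ys, if ys ∈ DsetCM k Y P n φ g then iidK k Y P n ys else 0) / DeltaCM k Y P n φ g := by
        rw [Finset.sum_div]
        exact Finset.sum_congr rfl fun ys _ => by unfold ptildeCM; split_ifs <;> simp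
    _ = 1 := div_self hΔ

/-- For `n = 0` both `μ₀ = 0^{-1/3}` and `N/0` are `0`, so typicality forces `P a = 0` for all `a`
and `D_k` is empty. -/
lemma pos_of_DeltaCM_pos (hP : IsPMF P) (hΔ : 0 < DeltaCM k Y P n φ g) : 0 < n := by
  refine Nat.pos_of_ne_zero fun hn => hΔ.ne' ?_
  subst hn
  obtain ⟨a, ha⟩ : ∃ a, P a ≠ 0 := by
    by_contra! h
    simpa [h] using hP.2
  refine Finset.sum_eq_zero fun ys _ => if_neg fun hys => ha (le_antisymm ?_ (hP.1 a))
  simpa [μseq, abs_of_nonneg (hP.1 a)] using (hys.2 a).1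

lemma probEq_margProd_msgOf_eq_QmsgCM (hΔ : DeltaCM k Y P n φ g ≠ 0) (hk : 1 ≤ k) (m : ℕ) :
    probEq (margProd (ptildeCM k Y P n φ g)) (msgOf φ (k - 1)) m = QmsgCM k Y P n φ g m := by
  set q := margSeqT k Y P n φ g
  have hlast : ∑ v, q (Fin.last k) v = 1 := (sum_probEq _).trans (sum_ptildeCM hΔ)
  have hmsg : ∀ pys v, msgOf φ (k - 1) (Fin.snoc (α := fun i => Fin n → Y i) pys v)
      = msgRec Y n φ (partialExt k Y n pys) (k - 1) := fun pys v =>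
    msgRec_congr φ (k - 1) fun ℓ hℓ => by
      have hℓk : ℓ < k := by omega
      rw [extendTup_of_lt _ (by omega), partialExt, dif_pos hℓk]
      exact Fin.snoc_castSucc (α := fun i => Fin n → Y i) (i := ⟨ℓ, hℓk⟩) ..
  have hmarg : ∀ pys v, margProd (ptildeCM k Y P n φ g) (Fin.snoc (α := fun i => Fin n → Y i) pys v)
      = (∏ j : Fin k, q j.castSucc (pys j)) * q (Fin.last k) v := fun pys v => by
    rw [margProd, Fin.prod_univ_castSucc]
    simp only [Fin.snoc_castSucc, Fin.snoc_last]
    rfl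
  have hsum : ∀ G : (∀ i : Fin (k + 1), Fin n → Y i) → ℝ,
      ∑ ys, G ys = ∑ pys, ∑ v, G (Fin.snoc (α := fun i => Fin n → Y i) pys v) := fun G => by
    rw [← (Fin.snocEquiv fun i => Fin n → Y i).sum_comp, Fintype.sum_prod_type, Finset.sum_comm]
    rfl
  simp only [probEq, hsum, hmsg, hmarg]
  refine Finset.sum_congr rfl fun pys _ => ?_
  split_ifs
  · rw [← Finset.mul_sum, hlast, mul_one, mul_one]
    rfl
  · simp

end ChangeOfMeasure

lemma klJointCM_succ_eq_klDivOf {k : ℕ} {Y : ℕ → Type} [∀ i, Fintype (Y i)] [∀ i, Nonempty (Y i)]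
    {P : (∀ i : Fin (k + 1 + 1), Y i) → ℝ} {n : ℕ} {φ : ∀ ℓ : ℕ, (Fin n → Y ℓ) → ℕ → ℕ}
    {g : (Fin n → Y (k + 1)) → ℕ → Bool} (hΔ : DeltaCM (k + 1) Y P n φ g ≠ 0) :
    klJointCM (k + 1) Y P n φ g
      = klDivOf (pmfProd (ptildeCM (k + 1) Y P n φ g) (margProd (ptildeCM (k + 1) Y P n φ g)))
        (fun ω => (msgOf φ k ω.1, extendTup (k + 1) Y n ω.1 (k + 1)))
        (fun ω => (msgOf φ k ω.2, extendTup (k + 1) Y n ω.2 (k + 1))) := by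
  set p := ptildeCM (k + 1) Y P n φ g
  have hp1 : ∑ ys, p ys = 1 := sum_ptildeCM hΔ
  have hlast : k + 1 < k + 1 + 1 := Nat.lt_succ_self _
  have hQ : ∀ a b, probEq (pmfProd p (margProd p))
      (fun ω => (msgOf φ k ω.2, extendTup (k + 1) Y n ω.2 (k + 1))) (a, b)
      = QmsgCM (k + 1) Y P n φ g a * margSeqT (k + 1) Y P n φ g (Fin.last (k + 1)) b := by
    intro a b
    rw [probEq_coupling_msgOf_extendTup φ hp1 hlast, probEq_pmfProd_snd hp1 (msgOf φ k),
      probEq_coupling_extendTup hp1 hlast,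
      probEq_pmfProd_fst (sum_margProd hp1) (fun ys => extendTup (k + 1) Y n ys (k + 1))]
    simp only [extendTup_of_lt _ hlast]
    exact congrArg (· * _) (probEq_margProd_msgOf_eq_QmsgCM hΔ (Nat.le_add_left 1 k) a)
  rw [klDivOf, sum_pmfProd_mul_fst (sum_margProd hp1) fun ys => Real.logb 2
    (probEq (pmfProd p (margProd p)) (fun ω => (msgOf φ k ω.1, extendTup (k + 1) Y n ω.1 (k + 1)))
      (msgOf φ k ys, extendTup (k + 1) Y n ys (k + 1))
    / probEq (pmfProd p (margProd p)) (fun ω => (msgOf φ k ω.2, extendTup (k + 1) Y n ω.2 (k + 1)))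
      (msgOf φ k ys, extendTup (k + 1) Y n ys (k + 1)))]
  refine Finset.sum_congr rfl fun ys _ => ?_
  rw [hQ, probEq_pmfProd_fst (sum_margProd hp1)
    (fun ys => (msgOf φ k ys, extendTup (k + 1) Y n ys (k + 1)))]
  rfl

section JointBound

variable {k : ℕ} {Y : ℕ → Type} [∀ i, Fintype (Y i)] [∀ i, Nonempty (Y i)]
  {P : (∀ i : Fin (k + 1), Y i) → ℝ} {n : ℕ} {φ : ∀ ℓ : ℕ, (Fin n → Y ℓ) → ℕ → ℕ}
  {g : (Fin n → Y k) → ℕ → Bool}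

lemma klJointCM_le_sum_miOf (hP : ∀ y, 0 ≤ P y) (hΔ : DeltaCM k Y P n φ g ≠ 0) (hk : 1 ≤ k) :
    klJointCM k Y P n φ g
      ≤ ∑ j : Fin k, miOf (ptildeCM k Y P n φ g) (msgOf φ j) (fun ys => ys (idxHi k j)) := by
  obtain ⟨k, rfl⟩ : ∃ k', k = k' + 1 := ⟨k - 1, by omega⟩
  set p := ptildeCM (k + 1) Y P n φ g
  have hp : ∀ ys, 0 ≤ p ys := ptildeCM_nonneg hP
  have hp1 : ∑ ys, p ys = 1 := sum_ptildeCM hΔ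
  have hsum : ∑ j : Fin (k + 1), miOf p (msgOf φ j) (fun ys => ys (idxHi (k + 1) j))
      = ∑ r ∈ Finset.range (k + 1),
          miOf p (msgOf φ r) (fun ys => extendTup (k + 1) Y n ys (r + 1)) := by
    rw [← Fin.sum_univ_eq_sum_range]
    refine Finset.sum_congr rfl fun j _ => ?_
    simp only [extendTup_of_lt _ (Nat.succ_lt_succ j.isLt)]
    rfl
  rw [klJointCM_succ_eq_klDivOf hΔ, klDivOf_coupling_msgOf_extendTup φ hp hp1 (Nat.lt_succ_self _),
    hsum, Finset.sum_range_succ]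
  linarith [klDivOf_coupling_msgOf_le φ hp hp1 k (by omega)]

end JointBound

theorem khop_divergence_single_letterization_general
    (k : ℕ) (Y : ℕ → Type) [∀ i, Fintype (Y i)] [∀ i, Nonempty (Y i)]
    (hk : 1 ≤ k)
    (P : (∀ i : Fin (k + 1), Y i) → ℝ) (hP : IsPMF P)
    (φ : ∀ n : ℕ, ∀ ℓ : ℕ, (Fin n → Y ℓ) → ℕ → ℕ)
    (g : ∀ n : ℕ, (Fin n → Y k) → ℕ → Bool) :
    ∀ n : ℕ, 0 < DeltaCM k Y P n (φ n) (g n) →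
      klJointCM k Y P n (φ n) (g n)
          ≤ ∑ j : Fin k,
              miOf (pfullCM k Y P n (φ n) (g n))
                (fun ω => MtilRV k Y n (φ n) (j : ℕ) ω)
                (fun ω => ω.1 (idxHi k j)) ∧
      (∑ j : Fin k,
          miOf (pfullCM k Y P n (φ n) (g n))
            (fun ω => MtilRV k Y n (φ n) (j : ℕ) ω)
            (fun ω => ω.1 (idxHi k j)))
        ≤ n * ∑ j : Fin k,
            miOf (pfullCM k Y P n (φ n) (g n))
              (UvarCM k Y n (φ n) (j : ℕ))
              (fun ω => ω.1 (idxHi k j) ω.2) := by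
  intro n hΔ
  set p := ptildeCM k Y P n (φ n) (g n)
  have hn : 0 < n := pos_of_DeltaCM_pos hP hΔ
  have hp : ∀ ys, 0 ≤ p ys := ptildeCM_nonneg hP.1
  have hp1 : ∑ ys, p ys = 1 := sum_ptildeCM hΔ.ne'
  have hfull : pfullCM k Y P n (φ n) (g n) = pmfProd p fun _ => (n : ℝ)⁻¹ :=
    funext fun _ => div_eq_mul_inv _ _
  have hforgetT : ∀ j : Fin k, miOf (pfullCM k Y P n (φ n) (g n))
      (fun ω => MtilRV k Y n (φ n) j ω) (fun ω => ω.1 (idxHi k j))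
      = miOf p (msgOf (φ n) j) (fun ys => ys (idxHi k j)) := fun j => by
    rw [hfull]
    exact miOf_pmfProd_fst (by simp [hn.ne']) (msgOf (φ n) j) fun ys => ys (idxHi k j)
  simp only [hforgetT]
  refine ⟨klJointCM_le_sum_miOf hP.1 hΔ.ne' hk, ?_⟩
  rw [Finset.mul_sum, hfull]
  exact Finset.sum_le_sum fun j _ => miOf_le_mul_miOf_timeSharing hp hp1 hn _ _
    (prefixAll k Y n) (fun v => v (idxHi k j)) fun _ _ => rfl

/-- divergence single-letterization chain:
`D(P_{M̃_k Ỹ_kⁿ} ‖ Q_{M̃_k} × P_{Ỹ_kⁿ}) ≤ ∑_{ℓ=1}^{k} I(M̃_ℓ; Ỹ_ℓⁿ) ≤ n·∑_{ℓ=1}^{k} I(U_ℓ; Ỹ_ℓ)`,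
where `U_ℓ := (M̃_ℓ, Ỹ₀^{T−1},…,Ỹ_k^{T−1}, T)` and `Ỹ_ℓ := Ỹ_{ℓ,T}` (here `ℓ = j+1`). -/
theorem khop_divergence_single_letterization
    (k : ℕ) (Y : ℕ → Type) [∀ i, Fintype (Y i)] [∀ i, Nonempty (Y i)]
    (hk : 1 ≤ k)
    (P : (∀ i : Fin (k + 1), Y i) → ℝ) (hP : IsPMF P) (hMC : IsMarkovChainK k Y P)
    (φ : ∀ n : ℕ, ∀ ℓ : ℕ, (Fin n → Y ℓ) → ℕ → ℕ)
    (g : ∀ n : ℕ, (Fin n → Y k) → ℕ → Bool) :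
    ∀ n : ℕ, 0 < DeltaCM k Y P n (φ n) (g n) →
      klJointCM k Y P n (φ n) (g n)
          ≤ ∑ j : Fin k,
              miOf (pfullCM k Y P n (φ n) (g n))
                (fun ω => MtilRV k Y n (φ n) (j : ℕ) ω)
                (fun ω => ω.1 (idxHi k j)) ∧
      (∑ j : Fin k,
          miOf (pfullCM k Y P n (φ n) (g n))
            (fun ω => MtilRV k Y n (φ n) (j : ℕ) ω)
            (fun ω => ω.1 (idxHi k j)))
        ≤ n * ∑ j : Fin k,
            miOf (pfullCM k Y P n (φ n) (g n))
              (UvarCM k Y n (φ n) (j : ℕ))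
              (fun ω => ω.1 (idxHi k j) ω.2) :=
  khop_divergence_single_letterization_general k Y hk P hP φ g
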